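/- For each positive integer k, (s(k) − σ(k))/2 − 2·ε_1(k) = s(r(k)), where ε_1(k) is the first M-digit of k, σ(k) is the sum of the M-digits of k, and r(k) is the reduction of k (the integer whose M-digit list is the left-shift of that of k, with r(1) = r(2) = 0). -/

import Mathlib

/-- `Alist k` is the list `A_{k+1}`: `A_1 = [5]`, `A_{k+1} = A_k ++ A_k ++ [1]`. -/
def Alist : ℕ → List ℕ
  | 0 => [5]
  | k+1 => Alist k ++ Alist k ++ [1]

/-- `aseq n` is the `n`-th term (1-indexed) of the limit of the lists `A_k`;
`aseq 0 = 0` by convention. -/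
def aseq (n : ℕ) : ℕ := (Alist n).getD (n - 1) 0

/-- Partial sums: `s n = a_1 + ⋯ + a_n`, `s 0 = 0`. -/
def s (n : ℕ) : ℕ := ∑ i ∈ Finset.Icc 1 n, aseq i

/-- The largest `ℓ` with `2^ℓ - 1 ≤ n` (for `n ≥ 1`). -/
def maxM (n : ℕ) : ℕ := Nat.findGreatest (fun ℓ => 2 ^ ℓ - 1 ≤ n) n

/-- `Mdig n i` is the digit `ε_i` in the greedy M-expansion
`n = ε_1·M_1 + ⋯ + ε_ℓ·M_ℓ` (with `M_i = 2^i - 1`): repeatedly subtract the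
largest Mersenne number `M_ℓ ≤ n`, recording a digit `2` if the remainder
equals `M_ℓ` again. -/
def Mdig (n : ℕ) : ℕ → ℕ :=
  if h : n = 0 then fun _ => 0
  else
    let ℓ := maxM n
    let r := n - (2 ^ ℓ - 1)
    if r = 2 ^ ℓ - 1 then fun i => if i = ℓ then 2 else 0
    else fun i => (if i = ℓ then 1 else 0) + Mdig r i
termination_by n
decreasing_by
  have h1 : 1 ≤ maxM n :=
    Nat.le_findGreatest (Nat.one_le_iff_ne_zero.mpr h) (by simpa using Nat.one_le_iff_ne_zero.mpr h)
  have h2 : 2 ≤ 2 ^ maxM n := by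
    calc (2 : ℕ) = 2 ^ 1 := rfl
    _ ≤ 2 ^ maxM n := Nat.pow_le_pow_right (by norm_num) h1
  have h3 : 1 ≤ n := Nat.one_le_iff_ne_zero.mpr h
  omega

/-- Sum of the M-digits of `n` (all nonzero digits have index `≤ n`). -/
def sigmaM (n : ℕ) : ℕ := ∑ i ∈ Finset.Icc 1 n, Mdig n i

/-- The reduction `r(k) = ε_2·M_1 + ε_3·M_2 + ⋯`: the integer whose M-digit
list is the left shift of that of `k` (so `r 1 = r 2 = 0`). -/
def reduce (k : ℕ) : ℕ := ∑ i ∈ Finset.Icc 1 k, Mdig k (i + 1) * (2 ^ i - 1)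

/-! Write `M_t = 2 ^ t - 1`. Removing the largest Mersenne number from `k` writes
`k = M_{ℓ+1} + r` with `r ≤ M_{ℓ+1}`, and the M-digits of `k` are those of `r` plus one at
position `ℓ + 1`. Since `A_{ℓ+2}` is two copies of `A_{ℓ+1}` followed by a `1`, `s` is additive
on such splittings, `s (M_{ℓ+1} + r) = s M_{ℓ+1} + s r`, and `s M_{ℓ+1} = 2 s M_ℓ + 1`, or `5`
when `ℓ = 0`. The reduction moves the leading digit down, `r(k) = M_ℓ + r(r)`, and the identity
`2 r(k) + σ(k) = k` gives `r(r) ≤ M_ℓ`, so `s` splits on `r(k)` as well. The formula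
`s k = σ k + 4 ε_1 k + 2 s (r k)` then follows by induction on `k`. -/

theorem List.IsPrefix.getD_eq {α : Type*} {l₁ l₂ : List α} (h : l₁ <+: l₂) {i : ℕ}
    (hi : i < l₁.length) (d : α) : l₁.getD i d = l₂.getD i d := by
  rw [List.getD_eq_getElem _ _ hi, List.getD_eq_getElem _ _ (hi.trans_le h.length_le),
    h.getElem hi]

theorem Finset.sum_Icc_eq_sum_Icc_of_eq_zero {M : Type*} [AddCommMonoid M] {f : ℕ → M}
    {a m n : ℕ} (hmn : m ≤ n) (hf : ∀ i, m < i → f i = 0) :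
    ∑ i ∈ Icc a n, f i = ∑ i ∈ Icc a m, f i :=
  (Finset.sum_subset (Finset.Icc_subset_Icc_right hmn) fun i hi hni => hf i <| by
    simp only [Finset.mem_Icc] at hi hni; omega).symm

theorem Alist_length (t : ℕ) : (Alist t).length = 2 ^ (t + 1) - 1 := by
  induction t with
  | zero => rfl
  | succ t ih =>
    simp only [Alist, List.length_append, ih, List.length_singleton, pow_succ]
    have := Nat.one_le_two_pow (n := t)
    omega

theorem Alist_prefix {k m : ℕ} (h : k ≤ m) : Alist k <+: Alist m := by
  induction m, h using Nat.le_induction with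
  | base => exact List.prefix_rfl
  | succ m _ ih =>
    rw [Alist, List.append_assoc]
    exact ih.trans (List.prefix_append _ _)

theorem aseq_eq_getD {m n : ℕ} (h : n - 1 < (Alist m).length) :
    aseq n = (Alist m).getD (n - 1) 0 := by
  have hn : n - 1 < (Alist n).length := by
    rw [Alist_length]
    have := Nat.lt_two_pow_self (n := n + 1)
    omega
  rw [aseq, (Alist_prefix (le_max_right m n)).getD_eq hn,
    (Alist_prefix (le_max_left m n)).getD_eq h]

theorem aseq_mersenne_add {t j : ℕ} (hj : 1 ≤ j) (hjt : j ≤ 2 ^ t - 1) :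
    aseq (2 ^ t - 1 + j) = aseq j := by
  obtain _ | t := t
  · omega
  have hlen := Alist_length t
  have hpow : 2 ^ (t + 1) = 2 * 2 ^ t := by ring
  have hi : 2 ^ (t + 1) - 1 + j - 1 < (Alist (t + 1)).length := by
    rw [Alist_length, pow_succ 2 (t + 1)]; omega
  rw [aseq_eq_getD hi, aseq_eq_getD (m := t) (by omega), List.getD_eq_getElem _ _ hi,
    List.getD_eq_getElem _ _ (by omega)]
  simp only [Alist, List.append_assoc]
  rw [List.getElem_append_right (by omega), List.getElem_append_left (by simp [hlen]; omega)]
  congr 1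
  omega

theorem aseq_mersenne (t : ℕ) : aseq (2 ^ (t + 1) - 1) = if t = 0 then 5 else 1 := by
  obtain _ | t := t
  · rfl
  have hlen := Alist_length t
  have hpow : 2 ^ (t + 1 + 1) = 2 * 2 ^ (t + 1) := by ring
  have := Nat.one_le_two_pow (n := t + 1)
  have hi : 2 ^ (t + 1 + 1) - 1 - 1 < (Alist (t + 1)).length := by
    rw [Alist_length]; omega
  rw [aseq_eq_getD hi, List.getD_eq_getElem _ _ hi]
  simp only [Alist, List.append_assoc]
  rw [List.getElem_append_right (by omega), List.getElem_append_right (by omega)]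
  simp

theorem s_zero : s 0 = 0 := rfl

theorem s_succ (n : ℕ) : s (n + 1) = s n + aseq (n + 1) :=
  Finset.sum_Icc_succ_top (by omega) _

theorem s_mersenne_add {t x : ℕ} (hx : x ≤ 2 ^ t - 1) :
    s (2 ^ t - 1 + x) = s (2 ^ t - 1) + s x := by
  induction x with
  | zero => rw [add_zero, s_zero, add_zero]
  | succ x ih =>
    rw [← add_assoc, s_succ, ih (by omega), add_assoc, Nat.add_assoc _ x,
      aseq_mersenne_add (by omega) hx, ← s_succ]

theorem s_mersenne_succ (t : ℕ) :
    s (2 ^ (t + 1) - 1) = 2 * s (2 ^ t - 1) + if t = 0 then 5 else 1 := by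
  have hsplit : 2 ^ (t + 1) - 1 = (2 ^ t - 1 + (2 ^ t - 1)) + 1 := by
    have := Nat.one_le_two_pow (n := t)
    rw [pow_succ]; omega
  rw [← aseq_mersenne, hsplit, s_succ, s_mersenne_add le_rfl, two_mul]

theorem maxM_mersenne_add {ℓ r : ℕ} (hr : r ≤ 2 ^ ℓ - 1) : maxM (2 ^ ℓ - 1 + r) = ℓ := by
  have hℓ := Nat.lt_two_pow_self (n := ℓ)
  refine Nat.findGreatest_eq_iff.mpr ⟨by omega, fun _ => by omega, fun n hn _ => ?_⟩
  have := Nat.pow_le_pow_right (show 0 < 2 by norm_num) hn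
  rw [pow_succ] at this
  omega

theorem Mdig_zero (i : ℕ) : Mdig 0 i = 0 := by
  rw [Mdig]; simp

theorem Mdig_mersenne_add {ℓ r : ℕ} (hr : r ≤ 2 ^ (ℓ + 1) - 1) (i : ℕ) :
    Mdig (2 ^ (ℓ + 1) - 1 + r) i = (if i = ℓ + 1 then 1 else 0) + Mdig r i := by
  have := Nat.lt_two_pow_self (n := ℓ + 1)
  have hlt : ∀ r < 2 ^ (ℓ + 1) - 1,
      Mdig (2 ^ (ℓ + 1) - 1 + r) i = (if i = ℓ + 1 then 1 else 0) + Mdig r i := by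
    intro r hr
    rw [Mdig, dif_neg (by omega), maxM_mersenne_add hr.le, Nat.add_sub_cancel_left,
      if_neg hr.ne]
  rcases hr.lt_or_eq with hr | rfl
  · exact hlt r hr
  · have hself := hlt 0 (by omega)
    rw [add_zero, Mdig_zero, add_zero] at hself
    rw [Mdig, dif_neg (by omega), maxM_mersenne_add le_rfl, Nat.add_sub_cancel_left,
      if_pos rfl, hself]
    split_ifs <;> rfl

theorem mersenne_induction {P : ℕ → Prop} (zero : P 0)
    (add : ∀ ℓ r, r ≤ 2 ^ (ℓ + 1) - 1 → P r → P (2 ^ (ℓ + 1) - 1 + r)) (n : ℕ) : P n := by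
  induction n using Nat.strong_induction_on with
  | _ n ih =>
    obtain _ | m := n
    · exact zero
    obtain ⟨ℓ, hℓ⟩ : ∃ ℓ, Nat.log 2 (m + 2) = ℓ + 1 :=
      Nat.exists_eq_add_one.mpr (Nat.log_pos (by norm_num) (by omega))
    have hlo := Nat.pow_log_le_self 2 (x := m + 2) (by omega)
    have hhi := Nat.lt_pow_succ_log_self (b := 2) (by norm_num) (m + 2)
    rw [hℓ] at hlo hhi
    rw [Nat.pow_succ] at hhi
    have hsplit : m + 1 = 2 ^ (ℓ + 1) - 1 + (m + 2 - 2 ^ (ℓ + 1)) := by omega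
    rw [hsplit]
    exact add ℓ _ (by omega) (ih _ (by omega))

theorem Mdig_eq_zero_of_lt {n i : ℕ} (h : n < i) : Mdig n i = 0 := by
  induction n using mersenne_induction generalizing i with
  | zero => exact Mdig_zero i
  | add ℓ r _ ih =>
    have := Nat.lt_two_pow_self (n := ℓ + 1)
    rw [Mdig_mersenne_add (by omega), if_neg (by omega), ih (by omega)]

theorem sigmaM_zero : sigmaM 0 = 0 := rfl

theorem sigmaM_mersenne_add {ℓ r : ℕ} (hr : r ≤ 2 ^ (ℓ + 1) - 1) :
    sigmaM (2 ^ (ℓ + 1) - 1 + r) = sigmaM r + 1 := by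
  have := Nat.lt_two_pow_self (n := ℓ + 1)
  rw [sigmaM, Finset.sum_congr rfl fun i _ => Mdig_mersenne_add hr i, Finset.sum_add_distrib,
    Finset.sum_ite_eq', if_pos (Finset.mem_Icc.mpr ⟨by omega, by omega⟩),
    Finset.sum_Icc_eq_sum_Icc_of_eq_zero (by omega) fun i hi => Mdig_eq_zero_of_lt hi,
    sigmaM, add_comm]

theorem reduce_zero : reduce 0 = 0 := rfl

theorem reduce_mersenne_add {ℓ r : ℕ} (hr : r ≤ 2 ^ (ℓ + 1) - 1) :
    reduce (2 ^ (ℓ + 1) - 1 + r) = 2 ^ ℓ - 1 + reduce r := by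
  have := Nat.lt_two_pow_self (n := ℓ + 1)
  have hlead : ∀ i, (if i + 1 = ℓ + 1 then 1 else 0) * (2 ^ i - 1) =
      if ℓ = i then 2 ^ ℓ - 1 else 0 := by
    intro i
    split_ifs <;> simp_all
  simp only [reduce, Mdig_mersenne_add hr, add_mul, Finset.sum_add_distrib, hlead,
    Finset.sum_ite_eq, Finset.mem_Icc]
  rw [Finset.sum_Icc_eq_sum_Icc_of_eq_zero (m := r) (by omega)
    fun i hi => by rw [Mdig_eq_zero_of_lt (by omega), zero_mul]]
  split_ifs with hℓ
  · rfl
  · obtain rfl : ℓ = 0 := by omega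
    simp

theorem two_mul_reduce_add_sigmaM (n : ℕ) : 2 * reduce n + sigmaM n = n := by
  induction n using mersenne_induction with
  | zero => rfl
  | add ℓ r hr ih =>
    rw [reduce_mersenne_add hr, sigmaM_mersenne_add hr, pow_succ]
    have := Nat.one_le_two_pow (n := ℓ)
    omega

theorem s_eq_sigmaM_add_Mdig_add_s_reduce (n : ℕ) :
    s n = sigmaM n + 4 * Mdig n 1 + 2 * s (reduce n) := by
  induction n using mersenne_induction with
  | zero => rw [sigmaM_zero, Mdig_zero, reduce_zero, s_zero]
  | add ℓ r hr ih =>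
    have hreduce : reduce r ≤ 2 ^ ℓ - 1 := by
      have := two_mul_reduce_add_sigmaM r
      rw [pow_succ] at hr
      omega
    rw [s_mersenne_add hr, s_mersenne_succ, ih, sigmaM_mersenne_add hr, Mdig_mersenne_add hr,
      reduce_mersenne_add hr, s_mersenne_add hreduce]
    split_ifs <;> omega

theorem s_reduction_formula_general (k : ℕ) :
    ((s k : ℤ) - sigmaM k) / 2 - 2 * Mdig k 1 = s (reduce k) := by
  have h : (s k : ℤ) = sigmaM k + 4 * Mdig k 1 + 2 * s (reduce k) := by
    exact_mod_cast s_eq_sigmaM_add_Mdig_add_s_reduce k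
  omega

/-- For each positive integer `k`,
`(s(k) − σ(k))/2 − 2·ε_1(k) = s(r(k))`, where `ε_1(k)` is the first M-digit
of `k`, `σ(k)` the sum of the M-digits of `k`, and `r(k)` the reduction of `k`. -/
theorem s_reduction_formula (k : ℕ) (hk : 1 ≤ k) :
    ((s k : ℤ) - sigmaM k) / 2 - 2 * Mdig k 1 = s (reduce k) :=
  s_reduction_formula_general k
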